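/- (Theorem 2, statement 1.) Let ξ be a DoS sequence satisfying Assumption 1 with inf F(ξ) = 0, and let B̂_d(t), B̂_f(t) be generated by the DoS estimator with parameters ℓ ≥ 2, ε₀ ∈ (0,1), θ ∈ (0,1). Then the estimation is reliable from time zero: for every t ≥ 0, B̂_d(t) is a duration-bound of ξ and B̂_f(t) is a frequency-bound of ξ. -/
import Mathlib


open MeasureTheory Filter Set

/-- The union of all DoS intervals `[h n, h n + τ n)`, `n ≥ 1`. -/
def DoSUnion (h τ : ℕ → ℝ) : Set ℝ :=
  ⋃ n ∈ Set.Ici (1 : ℕ), Set.Ico (h n) (h n + τ n)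

/-- `|Ξ(0,t)|`: the Lebesgue measure of the part of `[0,t]` under DoS attack. -/
noncomputable def xiMeas (h τ : ℕ → ℝ) (t : ℝ) : ℝ :=
  (volume (DoSUnion h τ ∩ Set.Icc 0 t)).toReal

/-- `n_ξ(0,t)`: the number of DoS off-to-on transitions `h n` lying in `[0,t]`. -/
noncomputable def nXi (h : ℕ → ℝ) (t : ℝ) : ℕ :=
  Set.ncard ({x : ℝ | ∃ n : ℕ, 1 ≤ n ∧ h n = x} ∩ Set.Icc 0 t)

/-- `ξ = (h, τ)` is a DoS sequence. -/
def IsDoS (h τ : ℕ → ℝ) : Prop :=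
  0 ≤ h 1 ∧ (∀ n, 1 ≤ n → 0 ≤ τ n) ∧ (∀ n, 1 ≤ n → h n + τ n < h (n + 1))

/-- `B` is a duration-bound of `ξ`. -/
def IsDurationBound (h τ : ℕ → ℝ) (B : ℝ) : Prop :=
  0 ≤ B ∧ B ≤ 1 ∧ ∃ κ > (0 : ℝ), ∀ t ≥ (0 : ℝ), xiMeas h τ t ≤ κ + B * t

/-- `D(ξ)`: the set of duration-bounds of `ξ`. -/
def durBounds (h τ : ℕ → ℝ) : Set ℝ := {B | IsDurationBound h τ B}

/-- `B` is a (finite) frequency-bound of `ξ`. -/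
def IsFreqBound (h : ℕ → ℝ) (B : ℝ) : Prop :=
  0 ≤ B ∧ ∃ Λ > (0 : ℝ), ∀ t ≥ (0 : ℝ), (nXi h t : ℝ) ≤ Λ + B * t

/-- `F(ξ)`: the set of finite frequency-bounds of `ξ`. -/
def freqBounds (h : ℕ → ℝ) : Set ℝ := {B | IsFreqBound h B}

/-- Assumption 1: `ξ` is not an edge case. -/
def Assumption1 (h τ : ℕ → ℝ) : Prop :=
  sInf (durBounds h τ) < 1 ∧ (freqBounds h).Nonempty ∧
    ∃ Γ > (0 : ℝ), ∀ n, 1 ≤ n → τ n ≤ Γ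

/-- `Bd` is the duration estimator generated by (8). -/
def IsDurEstimator (h τ : ℕ → ℝ) (l : ℕ) (ε₀ θ : ℝ) (Bd : ℝ → ℝ) : Prop :=
  (∀ t, 0 ≤ t → t < h l + τ l → Bd t = ε₀) ∧
  ∀ n, ∀ hn : l ≤ n, ∀ t, h n + τ n ≤ t → t < h (n + 1) + τ (n + 1) →
    Bd t = (Finset.Icc l n).sup' (Finset.nonempty_Icc.mpr hn)
      (fun i => max ε₀ (θ * (xiMeas h τ (h i + τ i) / (h i + τ i)) + (1 - θ)))

/-- `Bf` is the frequency estimator generated by (9). -/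
def IsFreqEstimator (h : ℕ → ℝ) (l : ℕ) (ε₀ θ : ℝ) (Bf : ℝ → ℝ) : Prop :=
  (∀ t, 0 ≤ t → t < h l → Bf t = ε₀) ∧
  ∀ n, ∀ hn : l ≤ n, ∀ t, h n ≤ t → t < h (n + 1) →
    Bf t = (Finset.Icc l n).sup' (Finset.nonempty_Icc.mpr hn)
      (fun i => max ε₀ (((i : ℝ) / h i) / θ))

section aux
variable {h τ : ℕ → ℝ}

lemma h_lt (hξ : IsDoS h τ) {m n : ℕ} (hm : 1 ≤ m) (hmn : m < n) : h m < h n := by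
  obtain ⟨h0, hτ, hlt⟩ := hξ
  induction n with
  | zero => omega
  | succ n ih =>
    rcases Nat.lt_succ_iff_lt_or_eq.mp hmn with h' | h'
    · exact lt_trans (ih h')
        (lt_of_le_of_lt (le_add_of_nonneg_right (hτ n (by omega))) (hlt n (by omega)))
    · subst h'; exact lt_of_le_of_lt (le_add_of_nonneg_right (hτ m hm)) (hlt m hm)

lemma h_le (hξ : IsDoS h τ) {m n : ℕ} (hm : 1 ≤ m) (hmn : m ≤ n) : h m ≤ h n := by
  rcases eq_or_lt_of_le hmn with rfl | h'
  · exact le_rfl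
  · exact (h_lt hξ hm h').le

lemma h_nonneg (hξ : IsDoS h τ) {n : ℕ} (hn : 1 ≤ n) : 0 ≤ h n :=
  hξ.1.trans (h_le hξ le_rfl hn)

lemma g_lt (hξ : IsDoS h τ) {m n : ℕ} (hm : 1 ≤ m) (hmn : m < n) :
    h m + τ m < h n + τ n :=
  lt_of_lt_of_le (hξ.2.2 m hm)
    (le_trans (h_le hξ (by omega) hmn) (le_add_of_nonneg_right (hξ.2.1 n (by omega))))

lemma nXi_eq (hξ : IsDoS h τ) {t : ℝ} {N : ℕ} (hN1 : 1 ≤ N) (hNt : h N ≤ t)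
    (hmax : ∀ n, 1 ≤ n → h n ≤ t → n ≤ N) : nXi h t = N := by
  have hset : {x : ℝ | ∃ n : ℕ, 1 ≤ n ∧ h n = x} ∩ Set.Icc 0 t = h '' Set.Icc 1 N := by
    ext x
    constructor
    · rintro ⟨⟨n, hn1, rfl⟩, _, hxt⟩
      exact ⟨n, ⟨hn1, hmax n hn1 hxt⟩, rfl⟩
    · rintro ⟨n, ⟨hn1, hnN⟩, rfl⟩
      exact ⟨⟨n, hn1, rfl⟩, h_nonneg hξ hn1, le_trans (h_le hξ hn1 hnN) hNt⟩
  rw [nXi, hset, Set.ncard_image_of_injOn, Set.ncard_eq_toFinset_card']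
  · simp
  · intro a ha b hb hab
    by_contra hne
    rcases Nat.lt_or_ge a b with h' | h'
    · exact absurd hab (ne_of_lt (h_lt hξ ha.1 h'))
    · exact absurd hab.symm (ne_of_lt (h_lt hξ hb.1 (by omega)))

lemma nXi_at_h (hξ : IsDoS h τ) {k : ℕ} (hk : 1 ≤ k) : nXi h (h k) = k := by
  refine nXi_eq hξ hk le_rfl (fun n hn hnt => ?_)
  by_contra hkn
  exact absurd hnt (not_le_of_gt (h_lt hξ hk (by omega)))

lemma h_unbounded (hξ : IsDoS h τ) (hFne : (freqBounds h).Nonempty) :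
    ∀ M : ℝ, ∃ n, 1 ≤ n ∧ M < h n := by
  intro M
  by_contra hc
  push_neg at hc
  obtain ⟨B, hB0, Λ, hΛ0, hbd⟩ := hFne
  set k : ℕ := ⌈Λ + B * M⌉₊ + 1 with hk
  have h1 : (k : ℝ) = nXi h (h k) := by rw [nXi_at_h hξ (by omega)]
  have h2 : (nXi h (h k) : ℝ) ≤ Λ + B * h k := hbd _ (h_nonneg hξ (by omega))
  have h3 : B * h k ≤ B * M := mul_le_mul_of_nonneg_left (hc k (by omega)) hB0
  have h4 : Λ + B * M ≤ ⌈Λ + B * M⌉₊ := Nat.le_ceil _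
  have : (k : ℝ) = (⌈Λ + B * M⌉₊ : ℝ) + 1 := by push_cast [hk]; ring
  linarith

lemma xiMeas_nonneg (h τ : ℕ → ℝ) (t : ℝ) : 0 ≤ xiMeas h τ t := ENNReal.toReal_nonneg

lemma xiMeas_le_self (h τ : ℕ → ℝ) {t : ℝ} (ht : 0 ≤ t) : xiMeas h τ t ≤ t := by
  refine ENNReal.toReal_le_of_le_ofReal ht ?_
  calc volume (DoSUnion h τ ∩ Set.Icc 0 t) ≤ volume (Set.Icc (0:ℝ) t) :=
        measure_mono Set.inter_subset_right
    _ = ENNReal.ofReal t := by rw [Real.volume_Icc, sub_zero]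

lemma xiMeas_le_gamma_nXi (hξ : IsDoS h τ) (hub : ∀ M : ℝ, ∃ n, 1 ≤ n ∧ M < h n)
    {Γ : ℝ} (hΓ0 : 0 ≤ Γ) (hΓ : ∀ n, 1 ≤ n → τ n ≤ Γ) {t : ℝ} (ht : 0 ≤ t) :
    xiMeas h τ t ≤ Γ * nXi h t := by
  rcases lt_or_ge t (h 1) with h1 | h1
  · have hempty : DoSUnion h τ ∩ Set.Icc 0 t = ∅ := by
      apply Set.eq_empty_iff_forall_notMem.mpr
      rintro x ⟨hx1, hx0, hxt⟩
      simp only [DoSUnion, Set.mem_iUnion, Set.mem_Ici, Set.mem_Ico] at hx1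
      obtain ⟨n, hn1, hxn, _⟩ := hx1
      have := h_le hξ le_rfl hn1
      linarith
    rw [xiMeas, hempty]
    simp
    positivity
  · obtain ⟨m, hm1, hmt⟩ := hub t
    have hlm : ∀ n, 1 ≤ n → h n ≤ t → n < m := by
      intro n hn hnt
      by_contra hc
      exact absurd hnt (not_le_of_gt (lt_of_lt_of_le hmt (h_le hξ hm1 (by omega))))
    set F : Finset ℕ := (Finset.Icc 1 m).filter (fun n => h n ≤ t) with hF
    have h1F : (1 : ℕ) ∈ F := by
      simp only [hF, Finset.mem_filter, Finset.mem_Icc]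
      exact ⟨⟨le_rfl, hm1⟩, h1⟩
    set N := F.max' ⟨1, h1F⟩ with hNdef
    have hNF : N ∈ F := F.max'_mem _
    have hN1 : 1 ≤ N := by
      simp only [hF, Finset.mem_filter, Finset.mem_Icc] at hNF; exact hNF.1.1
    have hNt : h N ≤ t := by
      simp only [hF, Finset.mem_filter, Finset.mem_Icc] at hNF; exact hNF.2
    have hmax : ∀ n, 1 ≤ n → h n ≤ t → n ≤ N := by
      intro n hn hnt
      exact F.le_max' n (by
        simp only [hF, Finset.mem_filter, Finset.mem_Icc]
        exact ⟨⟨hn, (hlm n hn hnt).le⟩, hnt⟩)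
    have hsub : DoSUnion h τ ∩ Set.Icc 0 t ⊆ ⋃ n ∈ Finset.Icc 1 N, Set.Ico (h n) (h n + τ n) := by
      rintro x ⟨hx1, hx0, hxt⟩
      simp only [DoSUnion, Set.mem_iUnion, Set.mem_Ici] at hx1
      obtain ⟨n, hn1, hxn⟩ := hx1
      have : h n ≤ t := le_trans hxn.1 hxt
      exact Set.mem_biUnion (Finset.mem_coe.mpr (Finset.mem_Icc.mpr ⟨hn1, hmax n hn1 this⟩)) hxn
    have hvol : volume (DoSUnion h τ ∩ Set.Icc 0 t) ≤ ENNReal.ofReal ((N : ℝ) * Γ) := by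
      calc volume (DoSUnion h τ ∩ Set.Icc 0 t)
          ≤ volume (⋃ n ∈ Finset.Icc 1 N, Set.Ico (h n) (h n + τ n)) := measure_mono hsub
        _ ≤ ∑ n ∈ Finset.Icc 1 N, volume (Set.Ico (h n) (h n + τ n)) :=
            measure_biUnion_finset_le _ _
        _ ≤ ∑ n ∈ Finset.Icc 1 N, ENNReal.ofReal Γ := by
            refine Finset.sum_le_sum (fun i hi => ?_)
            rw [Real.volume_Ico, add_sub_cancel_left]
            exact ENNReal.ofReal_le_ofReal (hΓ i (Finset.mem_Icc.mp hi).1)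
        _ = (Finset.Icc 1 N).card • ENNReal.ofReal Γ := Finset.sum_const _
        _ = ENNReal.ofReal ((N : ℝ) * Γ) := by
            rw [ENNReal.ofReal_mul (by positivity), ENNReal.ofReal_natCast,
              nsmul_eq_mul, Nat.card_Icc]
            norm_num
    have := ENNReal.toReal_le_of_le_ofReal (by positivity) hvol
    rw [nXi_eq hξ hN1 hNt hmax]
    calc xiMeas h τ t ≤ (N : ℝ) * Γ := this
      _ = Γ * N := mul_comm _ _

end aux

lemma find_N (f : ℕ → ℝ) (hmono : ∀ m n : ℕ, 1 ≤ m → m < n → f m < f n)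
    (hub : ∀ M : ℝ, ∃ n, 1 ≤ n ∧ M < f n) {l : ℕ} (hl : 1 ≤ l) {t : ℝ} (hlt : f l ≤ t) :
    ∃ N, l ≤ N ∧ f N ≤ t ∧ t < f (N + 1) := by
  obtain ⟨m, hm1, hmt⟩ := hub t
  have hle : ∀ a b : ℕ, 1 ≤ a → a ≤ b → f a ≤ f b := by
    intro a b ha hab
    rcases eq_or_lt_of_le hab with rfl | h'
    · exact le_rfl
    · exact (hmono a b ha h').le
  have hlm : ∀ n, 1 ≤ n → f n ≤ t → n < m := by
    intro n hn hnt
    by_contra hc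
    exact absurd hnt (not_le_of_gt (lt_of_lt_of_le hmt (hle m n hm1 (Nat.le_of_not_lt hc))))
  set F : Finset ℕ := (Finset.Icc l m).filter (fun n => f n ≤ t) with hF
  have hlF : l ∈ F := by
    simp only [hF, Finset.mem_filter, Finset.mem_Icc]
    exact ⟨⟨le_rfl, (hlm l hl hlt).le⟩, hlt⟩
  set N := F.max' ⟨l, hlF⟩ with hNdef
  have hNF : N ∈ F := F.max'_mem _
  simp only [hF, Finset.mem_filter, Finset.mem_Icc] at hNF
  refine ⟨N, hNF.1.1, hNF.2, ?_⟩
  by_contra hc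
  push_neg at hc
  have : N + 1 ∈ F := by
    simp only [hF, Finset.mem_filter, Finset.mem_Icc]
    exact ⟨⟨by omega, (hlm (N + 1) (by omega) hc).le⟩, hc⟩
  have := F.le_max' (N + 1) this
  omega

/-- Theorem 2, statement 1: under Assumption 1 with `inf F(ξ) = 0`, the
estimation is reliable from time zero. -/
theorem estimator_reliable_from_zero (h τ : ℕ → ℝ) (hξ : IsDoS h τ)
    (hA1 : Assumption1 h τ) (hF0 : sInf (freqBounds h) = 0)
    (l : ℕ) (hl : 2 ≤ l) (ε₀ θ : ℝ)
    (hε₀ : 0 < ε₀ ∧ ε₀ < 1) (hθ : 0 < θ ∧ θ < 1) (Bd Bf : ℝ → ℝ)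
    (hBd : IsDurEstimator h τ l ε₀ θ Bd) (hBf : IsFreqEstimator h l ε₀ θ Bf) :
    ∀ t ≥ (0 : ℝ), Bd t ∈ durBounds h τ ∧ Bf t ∈ freqBounds h := by
  intro t ht
  obtain ⟨hε0, hε1⟩ := hε₀
  obtain ⟨hθ0, hθ1⟩ := hθ
  obtain ⟨-, hFne, Γ, hΓ0, hΓ⟩ := hA1
  have hub := h_unbounded hξ hFne
  have hgub : ∀ M : ℝ, ∃ n, 1 ≤ n ∧ M < h n + τ n := by
    intro M
    obtain ⟨n, hn, h'⟩ := hub M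
    exact ⟨n, hn, lt_of_lt_of_le h' (le_add_of_nonneg_right (hξ.2.1 n hn))⟩
  have hl1 : 1 ≤ l := by omega
  have hlpos : 0 < h l :=
    lt_of_lt_of_le (lt_of_le_of_lt (add_nonneg hξ.1 (hξ.2.1 1 le_rfl)) (hξ.2.2 1 le_rfl))
      (h_le hξ (by omega) hl)
  have hBdval : ε₀ ≤ Bd t ∧ Bd t ≤ 1 := by
    rcases lt_or_ge t (h l + τ l) with hc | hc
    · rw [hBd.1 t ht hc]; exact ⟨le_rfl, hε1.le⟩
    · obtain ⟨N, hlN, hNt, htN⟩ :=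
        find_N (fun n => h n + τ n) (fun m n hm hmn => g_lt hξ hm hmn) hgub hl1 hc
      rw [hBd.2 N hlN t hNt htN]
      constructor
      · refine le_trans
          (le_max_left ε₀ (θ * (xiMeas h τ (h l + τ l) / (h l + τ l)) + (1 - θ))) ?_
        exact Finset.le_sup'
          (fun i => max ε₀ (θ * (xiMeas h τ (h i + τ i) / (h i + τ i)) + (1 - θ)))
          (Finset.mem_Icc.mpr ⟨le_rfl, hlN⟩)
      · apply Finset.sup'_le
        intro i hi
        have hil : l ≤ i := (Finset.mem_Icc.mp hi).1
        have hgi : 0 < h i + τ i :=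
          lt_of_lt_of_le hlpos (le_trans (h_le hξ hl1 hil)
            (le_add_of_nonneg_right (hξ.2.1 i (by omega))))
        have hx1 : xiMeas h τ (h i + τ i) ≤ h i + τ i := xiMeas_le_self h τ hgi.le
        have hr : xiMeas h τ (h i + τ i) / (h i + τ i) ≤ 1 :=
          div_le_one_of_le₀ hx1 hgi.le
        apply max_le hε1.le
        nlinarith
  have hBfval : ε₀ ≤ Bf t := by
    rcases lt_or_ge t (h l) with hc | hc
    · rw [hBf.1 t ht hc]
    · obtain ⟨N, hlN, hNt, htN⟩ := find_N h (fun m n hm hmn => h_lt hξ hm hmn) hub hl1 hc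
      rw [hBf.2 N hlN t hNt htN]
      refine le_trans (le_max_left ε₀ (((l : ℝ) / h l) / θ)) ?_
      exact Finset.le_sup' (fun (i : ℕ) => max ε₀ (((i : ℝ) / h i) / θ))
        (Finset.mem_Icc.mpr ⟨le_rfl, hlN⟩)
  have hbdd : BddBelow (freqBounds h) := ⟨0, fun b hb => hb.1⟩
  constructor
  · have hpos : (0 : ℝ) < Bd t / Γ := div_pos (lt_of_lt_of_le hε0 hBdval.1) hΓ0
    obtain ⟨b, hbmem, hblt⟩ := (csInf_lt_iff hbdd hFne).mp (by rw [hF0]; exact hpos)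
    obtain ⟨hb0, Λ, hΛ0, hbd'⟩ := hbmem
    have h3 : b * Γ < Bd t := (lt_div_iff₀ hΓ0).mp hblt
    refine ⟨le_trans hε0.le hBdval.1, hBdval.2, Γ * Λ, by positivity, fun s hs => ?_⟩
    have h1 := xiMeas_le_gamma_nXi hξ hub hΓ0.le hΓ hs
    have h2 := hbd' s hs
    nlinarith [mul_le_mul_of_nonneg_left h2 hΓ0.le, mul_le_mul_of_nonneg_right h3.le hs]
  · have hpos : (0 : ℝ) < Bf t := lt_of_lt_of_le hε0 hBfval
    obtain ⟨b, hbmem, hblt⟩ := (csInf_lt_iff hbdd hFne).mp (by rw [hF0]; exact hpos)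
    obtain ⟨hb0, Λ, hΛ0, hbd'⟩ := hbmem
    refine ⟨hε0.le.trans hBfval, Λ, hΛ0, fun s hs => ?_⟩
    have := hbd' s hs
    nlinarith [mul_le_mul_of_nonneg_right hblt.le hs]
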